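/- arXiv:2410.06820 — 2 statements merged into one kernel-verified Lean document; each statement's English description precedes it below -/
import Mathlib

section
/- Let K ≥ 1 be a natural number, let D be the (K+1)×(K+1) real diagonal matrix with diagonal entries D_{kk} = k⁴ for k = 0, 1, …, K, let v ∈ ℝ^{K+1}, let λ ≥ 0, and set A = D + λ v vᵀ. Then A is symmetric positive semidefinite, its largest eigenvalue satisfies λ_max(A) ≥ K⁴, and its smallest eigenvalue satisfies λ_min(A) ≤ 1. Consequently, if A is positive definite, its condition number obeys κ(A) = λ_max(A)/λ_min(A) ≥ K⁴. -/
/-!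
Both `D = diag(k⁴)` and `λ v vᵀ` are positive semidefinite, hence so is `A`. The extreme
eigenvalues bound the Rayleigh quotient `xᵀAx / xᵀx` from both sides. Testing with `x = e_K`
gives `λ_max ≥ A_KK = K⁴ + λ v_K² ≥ K⁴`. Testing with a nonzero `x ∈ span(e₀, e₁)` orthogonal
to `v` kills the rank-one term, leaving `xᵀAx = x₁² ≤ xᵀx`, so `λ_min ≤ 1`. For positive
definite `A` the least eigenvalue is positive, and `κ = λ_max/λ_min ≥ λ_max ≥ K⁴`.
-/

open Matrix

noncomputable def poissonSystemMatrix (K : ℕ) (v : Fin (K + 1) → ℝ) (lam : ℝ) :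
    Matrix (Fin (K + 1)) (Fin (K + 1)) ℝ :=
  Matrix.diagonal (fun k : Fin (K + 1) => ((k : ℕ) : ℝ) ^ 4) + lam • Matrix.vecMulVec v v

namespace Matrix

variable {n : Type*} [Fintype n] {A : Matrix n n ℝ} {c : ℝ}

lemma PosDef.pos_of_mulVec_eq_smul (hA : A.PosDef) {μ : ℝ} {w : n → ℝ} (hw : w ≠ 0)
    (hAw : A *ᵥ w = μ • w) : 0 < μ := by
  have h := hA.dotProduct_mulVec_pos hw
  rw [star_trivial, hAw, dotProduct_smul, smul_eq_mul] at h
  exact pos_of_mul_pos_left h (dotProduct_self_star_pos_iff.mpr hw).le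

variable [DecidableEq n]

lemma IsHermitian.posSemidef_sub_smul_one (hA : A.IsHermitian)
    (hc : c ∈ lowerBounds {μ : ℝ | ∃ w : n → ℝ, w ≠ 0 ∧ A *ᵥ w = μ • w}) :
    (A - c • (1 : Matrix n n ℝ)).PosSemidef := by
  have hB : (A - c • (1 : Matrix n n ℝ)).IsHermitian :=
    hA.sub (isHermitian_one.smul (IsSelfAdjoint.all c))
  refine hB.posSemidef_iff_eigenvalues_nonneg.mpr fun i => ?_
  set u : n → ℝ := ⇑(hB.eigenvectorBasis i)
  have hu : u ≠ 0 := by simpa [u] using hB.eigenvectorBasis.orthonormal.ne_zero i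
  have hAu : A *ᵥ u = (hB.eigenvalues i + c) • u := by
    have := hB.mulVec_eigenvectorBasis i
    rw [sub_mulVec, smul_mulVec, one_mulVec] at this
    rw [add_smul, ← this, sub_add_cancel]
  simpa using hc ⟨u, hu, hAu⟩

lemma IsHermitian.mul_dotProduct_self_le_dotProduct_mulVec (hA : A.IsHermitian)
    (hc : c ∈ lowerBounds {μ : ℝ | ∃ w : n → ℝ, w ≠ 0 ∧ A *ᵥ w = μ • w}) (x : n → ℝ) :
    c * (x ⬝ᵥ x) ≤ x ⬝ᵥ A *ᵥ x := by
  have := (hA.posSemidef_sub_smul_one hc).dotProduct_mulVec_nonneg x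
  simpa [sub_mulVec, smul_mulVec, dotProduct_sub] using this

lemma IsHermitian.dotProduct_mulVec_le_mul_dotProduct_self (hA : A.IsHermitian)
    (hc : c ∈ upperBounds {μ : ℝ | ∃ w : n → ℝ, w ≠ 0 ∧ A *ᵥ w = μ • w}) (x : n → ℝ) :
    x ⬝ᵥ A *ᵥ x ≤ c * (x ⬝ᵥ x) := by
  have hc' : -c ∈ lowerBounds {μ : ℝ | ∃ w : n → ℝ, w ≠ 0 ∧ -A *ᵥ w = μ • w} := by
    rintro μ ⟨w, hw, hAw⟩
    have : A *ᵥ w = -μ • w := by rw [neg_smul, ← hAw, neg_mulVec, neg_neg]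
    linarith [hc ⟨w, hw, this⟩]
  simpa [neg_mulVec] using hA.neg.mul_dotProduct_self_le_dotProduct_mulVec hc' x

lemma IsHermitian.apply_le_of_mem_upperBounds (hA : A.IsHermitian)
    (hc : c ∈ upperBounds {μ : ℝ | ∃ w : n → ℝ, w ≠ 0 ∧ A *ᵥ w = μ • w}) (i : n) :
    A i i ≤ c := by
  simpa using hA.dotProduct_mulVec_le_mul_dotProduct_self hc (Pi.single i 1)

lemma dotProduct_mulVec_diagonal_add_smul_vecMulVec {R : Type*} [CommRing R]
    (d v : n → R) (lam : R) (x : n → R) :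
    x ⬝ᵥ (diagonal d + lam • vecMulVec v v) *ᵥ x = ∑ i, d i * x i ^ 2 + lam * (v ⬝ᵥ x) ^ 2 := by
  simp only [add_mulVec, smul_mulVec, vecMulVec_mulVec, dotProduct_add, dotProduct_smul,
    op_smul_eq_smul, smul_eq_mul, dotProduct_comm x v]
  congr 1
  · exact Finset.sum_congr rfl fun i _ => by rw [mulVec_diagonal]; ring
  · ring

lemma posSemidef_diagonal_add_smul_vecMulVec {d : n → ℝ} (hd : 0 ≤ d) (v : n → ℝ) {lam : ℝ}
    (hlam : 0 ≤ lam) : (diagonal d + lam • vecMulVec v v).PosSemidef :=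
  (PosSemidef.diagonal hd).add ((posSemidef_vecMulVec_self_star v).smul hlam)

lemma isHermitian_diagonal_add_smul_vecMulVec (d v : n → ℝ) (lam : ℝ) :
    (diagonal d + lam • vecMulVec v v).IsHermitian :=
  (isHermitian_diagonal d).add ((posSemidef_vecMulVec_self_star v).isHermitian.smul (.all lam))

lemma exists_ne_zero_dotProduct_eq_zero_of_ne (v : n → ℝ) {i j : n} (hij : i ≠ j) :
    ∃ x : n → ℝ, x ≠ 0 ∧ v ⬝ᵥ x = 0 ∧ ∀ k, x k ≠ 0 → k = i ∨ k = j := by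
  by_cases hv : v j = 0
  · refine ⟨Pi.single j 1, by simp, by simp [hv], fun k hk => .inr ?_⟩
    by_contra h
    simp [h] at hk
  · refine ⟨Pi.single i (v j) - Pi.single j (v i), fun h => hv ?_, ?_, fun k hk => ?_⟩
    · simpa [hij] using congrFun h i
    · simp [mul_comm]
    · by_contra! h
      simp [h.1, h.2] at hk

lemma le_of_mem_lowerBounds_diagonal_add_smul_vecMulVec {d : n → ℝ} (v : n → ℝ) (lam : ℝ)
    {i j : n} (hij : i ≠ j) {b : ℝ} (hi : d i ≤ b) (hj : d j ≤ b)
    (hc : c ∈ lowerBounds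
      {μ : ℝ | ∃ w : n → ℝ, w ≠ 0 ∧ (diagonal d + lam • vecMulVec v v) *ᵥ w = μ • w}) :
    c ≤ b := by
  obtain ⟨x, hx0, hvx, hsupp⟩ := exists_ne_zero_dotProduct_eq_zero_of_ne v hij
  have hquad : x ⬝ᵥ (diagonal d + lam • vecMulVec v v) *ᵥ x ≤ b * (x ⬝ᵥ x) := by
    rw [dotProduct_mulVec_diagonal_add_smul_vecMulVec, hvx, dotProduct, Finset.mul_sum]
    rw [zero_pow two_ne_zero, mul_zero, add_zero]
    refine Finset.sum_le_sum fun k _ => ?_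
    by_cases hk : x k = 0
    · simp [hk]
    · have : d k ≤ b := by rcases hsupp k hk with rfl | rfl <;> assumption
      nlinarith [sq_nonneg (x k)]
  have hxx : 0 < x ⬝ᵥ x := dotProduct_self_star_pos_iff.mpr hx0
  exact le_of_mul_le_mul_right
    (((isHermitian_diagonal_add_smul_vecMulVec d v lam).mul_dotProduct_self_le_dotProduct_mulVec
      hc x).trans hquad) hxx

end Matrix

/-- For `K ≥ 1`, `λ ≥ 0`, the matrix `A = diag(k⁴) + λ v vᵀ` is symmetric
positive semidefinite, its largest eigenvalue satisfies `λ_max(A) ≥ K⁴`, its smallest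
eigenvalue satisfies `λ_min(A) ≤ 1`, and if `A` is positive definite then
`κ(A) = λ_max(A)/λ_min(A) ≥ K⁴`. -/
theorem poisson_condition_number (K : ℕ) (hK : 1 ≤ K)
    (v : Fin (K + 1) → ℝ) (lam : ℝ) (hlam : 0 ≤ lam)
    (lmin lmax : ℝ)
    (hmax : IsGreatest {μ : ℝ | ∃ w : Fin (K + 1) → ℝ, w ≠ 0 ∧
      (poissonSystemMatrix K v lam).mulVec w = μ • w} lmax)
    (hmin : IsLeast {μ : ℝ | ∃ w : Fin (K + 1) → ℝ, w ≠ 0 ∧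
      (poissonSystemMatrix K v lam).mulVec w = μ • w} lmin) :
    (poissonSystemMatrix K v lam).PosSemidef ∧
    ((K : ℝ) ^ 4 ≤ lmax) ∧
    (lmin ≤ 1) ∧
    ((poissonSystemMatrix K v lam).PosDef → (K : ℝ) ^ 4 ≤ lmax / lmin) := by
  have hpsd : (poissonSystemMatrix K v lam).PosSemidef :=
    posSemidef_diagonal_add_smul_vecMulVec (fun k => by positivity) v hlam
  have hmax4 : (K : ℝ) ^ 4 ≤ lmax := calc
    (K : ℝ) ^ 4 ≤ poissonSystemMatrix K v lam (Fin.last K) (Fin.last K) := by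
      simpa [poissonSystemMatrix, vecMulVec_apply] using mul_nonneg hlam (mul_self_nonneg _)
    _ ≤ lmax := hpsd.isHermitian.apply_le_of_mem_upperBounds hmax.2 _
  have hmin1 : lmin ≤ 1 :=
    le_of_mem_lowerBounds_diagonal_add_smul_vecMulVec (i := 0) (j := ⟨1, by omega⟩) v lam
      (by simp [Fin.ext_iff]) (by simp) (by simp) hmin.2
  refine ⟨hpsd, hmax4, hmin1, fun hpd => ?_⟩
  obtain ⟨w, hw0, hw⟩ := hmin.1
  exact hmax4.trans <| le_div_self ((by positivity : (0 : ℝ) ≤ (K : ℝ) ^ 4).trans hmax4) (hpd.pos_of_mulVec_eq_smul hw0 hw) hmin1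
end

section
/- (Convergence rate in the linear case.) Let A and P be real n×n matrices with n ≥ 1, let η ∈ ℝ be nonzero, and let L ≥ 1. Suppose there are m training instances: for each k = 1, …, m, vectors b_k ∈ ℝⁿ and Θ*_k ∈ ℝⁿ with AΘ*_k = b_k, and a sequence Θ_0^{(k)}, …, Θ_L^{(k)} satisfying the preconditioned iteration Θ_{l+1}^{(k)} = Θ_l^{(k)} − ηP(AΘ_l^{(k)} − b_k) and achieving exact fit Θ_L^{(k)} = Θ*_k. Let X be the n×m matrix whose k-th column is Θ_0^{(k)} − Θ*_k, and assume X·Xᵀ is invertible. Then (I − ηPA)^L = 0, and consequently every complex eigenvalue of the matrix PA equals 1/η; in particular the ratio of the largest to the smallest modulus of the eigenvalues of PA equals 1. -/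
/-!
Writing `M = 1 - η • (P * A)`, the error `Θ_l - Θ*` of each instance evolves by `e ↦ M e`, so
exact fit says that `M ^ L` kills every column of `X`. As `X * Xᵀ` is invertible, `X` has a
right inverse and hence `M ^ L = 0`. Over `ℂ`, each eigenvalue `μ` of `P * A` gives the
eigenvalue `1 - η μ` of the nilpotent matrix `M`, which must vanish: `μ = 1 / η`.
-/

open Matrix

theorem Matrix.sub_eq_pow_mulVec_of_preconditioned_iteration {ι R : Type*} [Fintype ι]
    [DecidableEq ι] [CommRing R] {A P : Matrix ι ι R} {η : R} {b xstar : ι → R}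
    (hsol : A *ᵥ xstar = b) {x : ℕ → ι → R} {L : ℕ}
    (hstep : ∀ l < L, x (l + 1) = x l - η • P *ᵥ (A *ᵥ x l - b)) :
    ∀ l ≤ L, x l - xstar = (1 - η • (P * A)) ^ l *ᵥ (x 0 - xstar) := by
  intro l hl
  induction l with
  | zero => simp
  | succ l ih =>
    have hstep' : x (l + 1) - xstar = (1 - η • (P * A)) *ᵥ (x l - xstar) := by
      rw [hstep l hl, ← hsol, sub_mulVec, one_mulVec, smul_mulVec, ← mulVec_mulVec,
        mulVec_sub A]
      abel
    rw [hstep', ih (by omega), mulVec_mulVec, ← pow_succ']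

theorem Matrix.mul_of_eq_zero_of_mulVec_eq_zero {ι ι' κ R : Type*} [Fintype ι'] [CommRing R]
    {B : Matrix ι ι' R} {v : κ → ι' → R} (h : ∀ k, B *ᵥ v k = 0) :
    B * of (fun i k => v k i) = 0 := by
  ext i k
  simpa [mul_apply, mulVec, dotProduct] using congrFun (h k) i

theorem Matrix.eq_zero_of_mul_eq_zero_of_isUnit_mul {ι κ R : Type*} [Fintype ι] [Fintype κ]
    [DecidableEq ι] [CommRing R] {B : Matrix ι ι R} {X : Matrix ι κ R} {Y : Matrix κ ι R}
    (hBX : B * X = 0) (hXY : IsUnit (X * Y)) : B = 0 :=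
  hXY.mul_left_eq_zero.mp (by rw [← Matrix.mul_assoc, hBX, Matrix.zero_mul])

theorem spectrum.eq_zero_of_isNilpotent {𝕜 A : Type*} [Field 𝕜] [Ring A] [Algebra 𝕜 A] {a : A}
    (ha : IsNilpotent a) {k : 𝕜} (hk : k ∈ spectrum 𝕜 a) : k = 0 := by
  obtain ⟨L, hL⟩ := ha
  have hkL := spectrum.pow_mem_pow a L hk
  cases subsingleton_or_nontrivial A with
  | inl _ => simp [spectrum.of_subsingleton] at hk
  | inr _ =>
    rw [hL, spectrum.zero_eq, Set.mem_singleton_iff] at hkL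
    exact eq_zero_of_pow_eq_zero hkL

theorem spectrum.mul_eq_one_of_isNilpotent_one_sub_smul {𝕜 A : Type*} [Field 𝕜] [Ring A]
    [Algebra 𝕜 A] {a : A} {η : 𝕜} (ha : IsNilpotent (1 - η • a)) {μ : 𝕜}
    (hμ : μ ∈ spectrum 𝕜 a) : η * μ = 1 := by
  have hmem : 1 - η * μ ∈ spectrum 𝕜 (1 - η • a) := by
    have := spectrum.subset_polynomial_aeval a (1 - Polynomial.C η * Polynomial.X) ⟨μ, hμ, rfl⟩
    simpa [Algebra.smul_def] using this
  exact (sub_eq_zero.mp (spectrum.eq_zero_of_isNilpotent ha hmem)).symm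

theorem learned_solver_optimal_conditioning_general {n m : ℕ}
    (A P : Matrix (Fin n) (Fin n) ℝ) (η : ℝ) (L : ℕ)
    (b Θstar : Fin m → Fin n → ℝ)
    (hsol : ∀ k : Fin m, A.mulVec (Θstar k) = b k)
    (Θ : Fin m → ℕ → Fin n → ℝ)
    (hiter : ∀ (k : Fin m) (l : ℕ), l < L →
      Θ k (l + 1) = Θ k l - η • P.mulVec (A.mulVec (Θ k l) - b k))
    (hfit : ∀ k : Fin m, Θ k L = Θstar k)
    (X : Matrix (Fin n) (Fin m) ℝ)
    (hX : X = Matrix.of fun (i : Fin n) (k : Fin m) => (Θ k 0 - Θstar k) i)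
    (hXunit : IsUnit (X * Xᵀ)) :
    ((1 : Matrix (Fin n) (Fin n) ℝ) - η • (P * A)) ^ L = 0 ∧
    (∀ μ : ℂ, μ ∈ spectrum ℂ ((P * A).map (Complex.ofReal ·)) → μ = 1 / (η : ℂ)) ∧
    (∀ μ₁ μ₂ : ℂ, μ₁ ∈ spectrum ℂ ((P * A).map (Complex.ofReal ·)) →
      μ₂ ∈ spectrum ℂ ((P * A).map (Complex.ofReal ·)) →
      ‖μ₁‖ / ‖μ₂‖ = 1) := by
  have herr (k : Fin m) : (1 - η • (P * A)) ^ L *ᵥ (Θ k 0 - Θstar k) = 0 := by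
    rw [← sub_eq_pow_mulVec_of_preconditioned_iteration (hsol k) (hiter k) L le_rfl, hfit k,
      sub_self]
  have hML : (1 - η • (P * A)) ^ L = 0 :=
    eq_zero_of_mul_eq_zero_of_isUnit_mul (hX ▸ mul_of_eq_zero_of_mulVec_eq_zero herr) hXunit
  have hnil : IsNilpotent (1 - (η : ℂ) • (P * A).map (Complex.ofReal ·)) := by
    have := IsNilpotent.map ⟨L, hML⟩ Complex.ofRealHom.mapMatrix
    rwa [map_sub, map_one, RingHom.mapMatrix_apply, Matrix.map_smul' _ _ _ (map_mul _)] at this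
  have heig (μ : ℂ) (hμ : μ ∈ spectrum ℂ ((P * A).map (Complex.ofReal ·))) : (η : ℂ) * μ = 1 :=
    spectrum.mul_eq_one_of_isNilpotent_one_sub_smul hnil hμ
  refine ⟨hML, fun μ hμ => eq_one_div_of_mul_eq_one_right (heig μ hμ), fun μ₁ μ₂ h₁ h₂ => ?_⟩
  have hμ : μ₁ = μ₂ := by
    rw [eq_one_div_of_mul_eq_one_right (heig μ₁ h₁), eq_one_div_of_mul_eq_one_right (heig μ₂ h₂)]
  rw [hμ, div_self (norm_ne_zero_iff.mpr (right_ne_zero_of_mul_eq_one (heig μ₂ h₂)))]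

/-- Convergence rate in the linear case: if for `m` training instances
the preconditioned iteration `Θ_{l+1}^{(k)} = Θ_l^{(k)} − ηP(AΘ_l^{(k)} − b_k)` with
`AΘ*_k = b_k` achieves exact fit `Θ_L^{(k)} = Θ*_k`, and the matrix `X` of initial
errors `Θ_0^{(k)} − Θ*_k` has `X·Xᵀ` invertible, then `(I − ηPA)^L = 0`; consequently
every complex eigenvalue of `PA` equals `1/η`, and in particular the ratio of the
largest to the smallest modulus of the eigenvalues of `PA` equals `1`. -/
theorem learned_solver_optimal_conditioning {n m : ℕ} (hn : 1 ≤ n)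
    (A P : Matrix (Fin n) (Fin n) ℝ) (η : ℝ) (hη : η ≠ 0) (L : ℕ) (hL : 1 ≤ L)
    (b Θstar : Fin m → Fin n → ℝ)
    (hsol : ∀ k : Fin m, A.mulVec (Θstar k) = b k)
    (Θ : Fin m → ℕ → Fin n → ℝ)
    (hiter : ∀ (k : Fin m) (l : ℕ), l < L →
      Θ k (l + 1) = Θ k l - η • P.mulVec (A.mulVec (Θ k l) - b k))
    (hfit : ∀ k : Fin m, Θ k L = Θstar k)
    (X : Matrix (Fin n) (Fin m) ℝ)
    (hX : X = Matrix.of fun (i : Fin n) (k : Fin m) => (Θ k 0 - Θstar k) i)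
    (hXunit : IsUnit (X * Xᵀ)) :
    ((1 : Matrix (Fin n) (Fin n) ℝ) - η • (P * A)) ^ L = 0 ∧
    (∀ μ : ℂ, μ ∈ spectrum ℂ ((P * A).map (Complex.ofReal ·)) → μ = 1 / (η : ℂ)) ∧
    (∀ μ₁ μ₂ : ℂ, μ₁ ∈ spectrum ℂ ((P * A).map (Complex.ofReal ·)) →
      μ₂ ∈ spectrum ℂ ((P * A).map (Complex.ofReal ·)) →
      ‖μ₁‖ / ‖μ₂‖ = 1) :=
  learned_solver_optimal_conditioning_general A P η L b Θstar hsol Θ hiter hfit X hX hXunit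
end
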